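/- Let M be a monoid and A a cyclic M-act. Then A is finitely presented if and only if A is isomorphic to the quotient of the M-act M by a finitely generated right congruence on M. -/

import Mathlib

/-- A right act of a monoid `M` on a type `A`. -/
structure RActOn (M : Type*) [Monoid M] (A : Type*) where
  act : A → M → A
  act_one : ∀ a, act a 1 = a
  act_mul : ∀ a m n, act a (m * n) = act (act a m) n

namespace RActOn

variable {M : Type*} [Monoid M]

/-- `f` is a homomorphism of `M`-acts. -/
def IsHom {A B : Type*} (α : RActOn M A) (β : RActOn M B) (f : A → B) : Prop :=
  ∀ a m, f (α.act a m) = β.act (f a) m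

/-- The two acts are isomorphic. -/
def Isomorphic {A B : Type*} (α : RActOn M A) (β : RActOn M B) : Prop :=
  ∃ f : A → B, IsHom α β f ∧ Function.Bijective f

/-- `ρ` is an `M`-act congruence on `A`. -/
def IsCong {A : Type*} (α : RActOn M A) (ρ : A → A → Prop) : Prop :=
  Equivalence ρ ∧ ∀ a b m, ρ a b → ρ (α.act a m) (α.act b m)

/-- The smallest congruence containing the relation `X`. -/
def congClosure {A : Type*} (α : RActOn M A) (X : A → A → Prop) : A → A → Prop :=
  fun a b => ∀ ρ : A → A → Prop, IsCong α ρ → (∀ x y, X x y → ρ x y) → ρ a b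

/-- The free `M`-act on a set `X`: carrier `X × M`, action `(x, m) · n = (x, m * n)`. -/
def free (M : Type*) [Monoid M] (X : Type*) : RActOn M (X × M) where
  act p n := (p.1, p.2 * n)
  act_one := by intro a; simp
  act_mul := by intro a m n; simp [mul_assoc]

/-- The `M`-act `α` is defined by the presentation `⟨X | R⟩`. -/
def DefinedBy {A : Type*} (α : RActOn M A) (X : Type*)
    (R : Set ((X × M) × (X × M))) : Prop :=
  ∃ f : X × M → A, Function.Surjective f ∧ IsHom (free M X) α f ∧
    ∀ u v : X × M, f u = f v ↔ congClosure (free M X) (fun a b => (a, b) ∈ R) u v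

/-- The `M`-act `α` is finitely presented. -/
def FinitelyPresented {A : Type*} (α : RActOn M A) : Prop :=
  ∃ (X : Type) (_ : Finite X) (R : Set ((X × M) × (X × M))),
    R.Finite ∧ DefinedBy α X R

/-- The `M`-act `α` is finitely generated. -/
def FinitelyGenerated {A : Type*} (α : RActOn M A) : Prop :=
  ∃ U : Set A, U.Finite ∧ ∀ a : A, ∃ u ∈ U, ∃ m : M, α.act u m = a

/-- `B` is a subact of `A`. -/
def IsSubact {A : Type*} (α : RActOn M A) (B : Set A) : Prop :=
  ∀ b ∈ B, ∀ m : M, α.act b m ∈ B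

/-- The subset `S` is generated, as a subact, by `U ⊆ S`. -/
def FGSet {A : Type*} (α : RActOn M A) (S : Set A) : Prop :=
  ∃ U ⊆ S, U.Finite ∧ ∀ a ∈ S, ∃ u ∈ U, ∃ m : M, α.act u m = a

/-- The act induced on a subact. -/
def subAct {A : Type*} (α : RActOn M A) (B : Set A) (hB : IsSubact α B) :
    RActOn M B where
  act b m := ⟨α.act b m, hB b b.2 m⟩
  act_one := by intro a; ext; simp [α.act_one]
  act_mul := by intro a m n; ext; simp [α.act_mul]

/-- The Rees congruence relation determined by `B`. -/
def reesRel {A : Type*} (B : Set A) : A → A → Prop :=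
  fun a b => a = b ∨ (a ∈ B ∧ b ∈ B)

/-- The Rees quotient act `A / B`. -/
def reesAct {A : Type*} (α : RActOn M A) (B : Set A) (hB : IsSubact α B) :
    RActOn M (Quot (reesRel B)) where
  act q m := Quot.lift (fun a => Quot.mk _ (α.act a m))
    (by
      intro a b h
      apply Quot.sound
      rcases h with h | ⟨ha, hb⟩
      · exact Or.inl (by rw [h])
      · exact Or.inr ⟨hB a ha m, hB b hb m⟩) q
  act_one := by
    intro q
    induction q using Quot.ind with
    | _ a => simp [α.act_one]
  act_mul := by
    intro q m n
    induction q using Quot.ind with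
    | _ a => simp [α.act_mul]

/-- The trivial one-element `M`-act. -/
def trivAct (M : Type*) [Monoid M] : RActOn M PUnit where
  act _ _ := PUnit.unit
  act_one := by intro a; rfl
  act_mul := by intro a m n; rfl

/-- The disjoint union of two `M`-acts. -/
def sumAct {A B : Type*} (α : RActOn M A) (β : RActOn M B) : RActOn M (A ⊕ B) where
  act x m := Sum.elim (fun a => Sum.inl (α.act a m)) (fun b => Sum.inr (β.act b m)) x
  act_one := by intro x; cases x <;> simp [α.act_one, β.act_one]
  act_mul := by intro x m n; cases x <;> simp [α.act_mul, β.act_mul]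

/-- The `M`-act `M` itself, by right multiplication. -/
def selfAct (M : Type*) [Monoid M] : RActOn M M where
  act a m := a * m
  act_one := by intro a; simp
  act_mul := by intro a m n; simp [mul_assoc]

end RActOn

/-!
Let `a` generate `A` and let `f : F → A` present `A` by relations `R`. Since `A` is cyclic, `f`
lifts through the orbit map `m ↦ a·m` to a hom `φ : F → M`. The kernel of the orbit map is then
generated by the image of `R` under `φ` together with the single pair `(φ p₀, 1)`, where
`f p₀ = a`: that pair relates every `m` to `φ p₀ * m = φ (p₀·m)`, which lies in the image of `φ`.
Conversely, `M` is the free act on one generator.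
-/

namespace RActOn

variable {M : Type*} [Monoid M] {A B C : Type*} {α : RActOn M A} {β : RActOn M B}
  {γ : RActOn M C}

theorem IsHom.comp {f : A → B} {h : B → C} (hh : IsHom β γ h) (hf : IsHom α β f) :
    IsHom α γ (h ∘ f) := fun a m => by
  simp only [Function.comp_apply, hf a m, hh (f a) m]

theorem isHom_act (a : A) : IsHom (selfAct M) α (α.act a) :=
  α.act_mul a

section Congruence

theorem isCong_eq (α : RActOn M A) : IsCong α Eq :=
  ⟨eq_equivalence, fun _ _ _ h => h ▸ rfl⟩

theorem IsCong.comap {ρ : B → B → Prop} (hρ : IsCong β ρ) {φ : A → B} (hφ : IsHom α β φ) :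
    IsCong α (fun a b => ρ (φ a) (φ b)) :=
  ⟨⟨fun _ => hρ.1.refl _, hρ.1.symm, hρ.1.trans⟩, fun a b m h => by
    show ρ (φ (α.act a m)) (φ (α.act b m))
    rw [hφ, hφ]
    exact hρ.2 _ _ m h⟩

theorem isCong_ker {f : A → B} (hf : IsHom α β f) : IsCong α (fun a b => f a = f b) :=
  (isCong_eq β).comap hf

variable {X : A → A → Prop}

theorem isCong_congClosure (α : RActOn M A) (X : A → A → Prop) :
    IsCong α (congClosure α X) :=
  ⟨⟨fun a _ hρ _ => hρ.1.refl a,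
    fun h ρ hρ hX => hρ.1.symm (h ρ hρ hX),
    fun h₁ h₂ ρ hρ hX => hρ.1.trans (h₁ ρ hρ hX) (h₂ ρ hρ hX)⟩,
   fun a b m h ρ hρ hX => hρ.2 a b m (h ρ hρ hX)⟩

theorem congClosure_le {ρ : A → A → Prop} (hρ : IsCong α ρ) (hX : ∀ x y, X x y → ρ x y)
    {a b : A} (h : congClosure α X a b) : ρ a b :=
  h ρ hρ hX

theorem le_congClosure {a b : A} (h : X a b) : congClosure α X a b :=
  fun _ _ hX => hX a b h

theorem congClosure_map {Y : B → B → Prop} {φ : A → B} (hφ : IsHom α β φ)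
    (hXY : ∀ x y, X x y → Y (φ x) (φ y)) {a b : A} (h : congClosure α X a b) :
    congClosure β Y (φ a) (φ b) :=
  congClosure_le ((isCong_congClosure β Y).comap hφ)
    (fun x y hxy => le_congClosure (hXY x y hxy)) h

end Congruence

section Free

variable {X : Type*}

def freeLift (β : RActOn M B) (s : X → B) : X × M → B :=
  fun p => β.act (s p.1) p.2

theorem isHom_freeLift (s : X → B) : IsHom (free M X) β (freeLift β s) :=
  fun p => β.act_mul (s p.1) p.2

theorem free_hom_ext {f f' : X × M → B} (hf : IsHom (free M X) β f)
    (hf' : IsHom (free M X) β f')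
    (h : ∀ x, f (x, 1) = f' (x, 1)) (p : X × M) : f p = f' p := by
  obtain ⟨x, m⟩ := p
  have hm : (x, m) = (free M X).act (x, 1) m := by simp [free]
  rw [hm, hf, hf', h]

end Free

theorem ker_eq_congClosure_of_factor {R : Set (B × B)} {f : B → A} (hf : IsHom β α f)
    (hker : ∀ u v, f u = f v ↔ congClosure β (fun a b => (a, b) ∈ R) u v)
    {g : M → A} (hg : IsHom (selfAct M) α g) {φ : B → M} (hφ : IsHom β (selfAct M) φ)
    (hgφ : ∀ p, g (φ p) = f p) {p₀ : B} (hp₀ : f p₀ = g 1) (u v : M) :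
    g u = g v ↔ congClosure (selfAct M)
      (fun a b => (a, b) ∈ Prod.map φ φ '' R ∪ {(φ p₀, 1)}) u v := by
  set Y := fun a b => (a, b) ∈ Prod.map φ φ '' R ∪ {(φ p₀, 1)}
  have hf_act : ∀ w, f (β.act p₀ w) = g w := fun w => by
    rw [hf, hp₀, ← hg]
    exact congrArg g (one_mul w)
  constructor
  · intro h
    have hR : congClosure β (fun a b => (a, b) ∈ R) (β.act p₀ u) (β.act p₀ v) :=
      (hker _ _).1 (by rw [hf_act, hf_act, h])
    have hY : congClosure (selfAct M) Y (φ p₀ * u) (φ p₀ * v) := by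
      have := congClosure_map (Y := Y) hφ (fun p q hpq => Or.inl ⟨(p, q), hpq, rfl⟩) hR
      rwa [hφ, hφ] at this
    have hp₀_one : ∀ w, congClosure (selfAct M) Y (φ p₀ * w) w := fun w => by
      simpa [selfAct] using
        (isCong_congClosure (selfAct M) Y).2 _ _ w (le_congClosure (Or.inr rfl))
    have hequiv := (isCong_congClosure (selfAct M) Y).1
    exact hequiv.trans (hequiv.symm (hp₀_one u)) (hequiv.trans hY (hp₀_one v))
  · refine congClosure_le (isCong_ker hg) ?_
    rintro _ _ (⟨⟨p, q⟩, hpq, ⟨⟩⟩ | h)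
    · rw [hgφ, hgφ]
      exact (hker p q).2 (le_congClosure hpq)
    · obtain ⟨rfl, rfl⟩ := Prod.mk.inj h
      rw [hgφ, hp₀]

theorem definedBy_punit_of_ker {g : M → A} (hg_surj : Function.Surjective g)
    (hg : IsHom (selfAct M) α g) {X : Set (M × M)}
    (hker : ∀ u v, g u = g v ↔ congClosure (selfAct M) (fun a b => (a, b) ∈ X) u v) :
    DefinedBy α PUnit ((fun q : M × M => (((), q.1), ((), q.2))) '' X) := by
  refine ⟨fun p => g p.2, fun b => ?_, fun p => hg p.2, ?_⟩
  · obtain ⟨m, rfl⟩ := hg_surj b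
    exact ⟨((), m), rfl⟩
  rintro ⟨⟨⟩, u⟩ ⟨⟨⟩, v⟩
  refine (hker u v).trans ⟨congClosure_map (φ := ((), ·)) (fun _ _ => rfl)
    (fun x y h => ⟨(x, y), h, rfl⟩), congClosure_map (φ := Prod.snd) (fun _ _ => rfl) ?_⟩
  rintro _ _ ⟨⟨x, y⟩, h, ⟨⟩⟩
  exact h

end RActOn

open RActOn in
/-- A cyclic `M`-act is finitely presented iff it is isomorphic to the quotient of the
`M`-act `M` by a finitely generated right congruence on `M`. -/
theorem cyclic_fp_iff {M : Type*} [Monoid M] {A : Type*} (α : RActOn M A)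
    (hcyc : ∃ a : A, ∀ b : A, ∃ m : M, α.act a m = b) :
    FinitelyPresented α ↔
      ∃ f : M → A, Function.Surjective f ∧ IsHom (selfAct M) α f ∧
        ∃ X : Set (M × M), X.Finite ∧
          ∀ u v : M, f u = f v ↔ congClosure (selfAct M) (fun a b => (a, b) ∈ X) u v := by
  constructor
  · rintro ⟨X, -, R, hR, f, hf_surj, hf, hker⟩
    obtain ⟨a, ha⟩ := hcyc
    choose s hs using fun x => ha (f (x, 1))
    obtain ⟨p₀, hp₀⟩ := hf_surj a
    have hgφ : ∀ p, α.act a (freeLift (selfAct M) s p) = f p :=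
      free_hom_ext ((isHom_act a).comp (isHom_freeLift s)) hf fun x => by
        simp [freeLift, selfAct, hs]
    exact ⟨α.act a, ha, isHom_act a, _, (hR.image _).union (Set.finite_singleton _),
      ker_eq_congClosure_of_factor hf hker (isHom_act a) (isHom_freeLift s) hgφ
        (by rw [hp₀, α.act_one])⟩
  · rintro ⟨g, hg_surj, hg, X, hX, hker⟩
    exact ⟨PUnit, inferInstance, _, hX.image _, definedBy_punit_of_ker hg_surj hg hker⟩
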